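/- Let F be a Borel probability measure on [0,1], let θ₁,…,θ_d > 0 with θ = Σ_i θ_i, and define the operator L on C²(Δ) by L g(x) = (1/2) Σ_{i,j=1}^d x_i(δ_{ij}−x_j) E[ ∂_i∂_j g( x(1−W)+WV e_i ) ] + (1/2) Σ_{i=1}^d (θ_i − θ x_i) ∂_i g(x), where Δ = {x ∈ [0,1]^d : Σ x_i ≤ 1}. If μ is a Borel probability measure on Δ such that ∫_Δ L g dμ = 0 for g(x) = x_i and g(x) = x_i x_j (all i,j), then ∫ x_i dμ = θ_i/θ and ∫ x_i x_j dμ = θ_i(θ_j + δ_{ij}) / ( θ(θ+1) ) for all i, j ∈ {1,…,d}, regardless of F. -/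

import Mathlib

open MeasureTheory Set

/-- Second partial derivative `∂_i ∂_j g` at `x`. -/
noncomputable def pd2 {d : ℕ} (g : (Fin d → ℝ) → ℝ) (i j : Fin d) (x : Fin d → ℝ) : ℝ :=
  fderiv ℝ (fun z => fderiv ℝ g z (Pi.single j 1)) x (Pi.single i 1)

/-- The `d`-dimensional Λ-Fleming-Viot generator with parent-independent mutation rates
`θ i`, in its Wright-Fisher representation: `W = U⬝Y`, `Y ∼ F`, `U` with density `2u` on
`(0,1)`, `V` uniform on `(0,1)`. -/
noncomputable def LopD {d : ℕ} (F : Measure ℝ) (θ : Fin d → ℝ)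
    (g : (Fin d → ℝ) → ℝ) (x : Fin d → ℝ) : ℝ :=
  (1/2) * ∑ i, ∑ j, x i * ((if i = j then 1 else 0) - x j) *
      (∫ y, (∫ u in Set.Ioo (0:ℝ) 1, (∫ v in Set.Ioo (0:ℝ) 1,
        pd2 g i j (fun k => x k * (1 - u * y) + if k = i then u * y * v else 0)) * (2 * u)) ∂F)
  + (1/2) * ∑ i, (θ i - (∑ t, θ t) * x i) * fderiv ℝ g x (Pi.single i 1)


/-!
Coordinates and their products have constant Hessians, so in the generator the expectation over
`(Y, U, V)` is taken of a constant and the law `F` drops out. The stationarity equations for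
`x i` and `x i * x j` then form a triangular linear system in the first and second moments of `μ`,
whose solution is the Dirichlet(`θ`) moments.
-/

section Generator

variable {d : ℕ}

theorem pd2_apply_eq_zero (a i j : Fin d) (x : Fin d → ℝ) :
    pd2 (fun z => z a) i j x = 0 := by
  have hgrad : (fun z : Fin d → ℝ => fderiv ℝ (fun z : Fin d → ℝ => z a) z (Pi.single j 1))
      = fun _ => (Pi.single j 1 : Fin d → ℝ) a := by
    funext z; rw [(hasFDerivAt_apply a z).fderiv]; rfl
  simp only [pd2, hgrad, fderiv_fun_const, Pi.zero_apply, zero_apply]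

theorem fderiv_apply_mul_apply (a b : Fin d) (x v : Fin d → ℝ) :
    fderiv ℝ (fun z : Fin d → ℝ => z a * z b) x v = x a * v b + x b * v a := by
  rw [((hasFDerivAt_apply a x).fun_mul (hasFDerivAt_apply b x)).fderiv]; rfl

theorem pd2_apply_mul_apply (a b i j : Fin d) (x : Fin d → ℝ) :
    pd2 (fun z => z a * z b) i j x
      = (Pi.single i 1 : Fin d → ℝ) a * (Pi.single j 1 : Fin d → ℝ) b
        + (Pi.single i 1 : Fin d → ℝ) b * (Pi.single j 1 : Fin d → ℝ) a := by
  set ej : Fin d → ℝ := Pi.single j 1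
  have hgrad : HasFDerivAt (fun z : Fin d → ℝ => fderiv ℝ (fun z => z a * z b) z ej)
      (ej b • ContinuousLinearMap.proj (R := ℝ) (φ := fun _ : Fin d => ℝ) a
        + ej a • ContinuousLinearMap.proj (R := ℝ) (φ := fun _ : Fin d => ℝ) b) x := by
    simp only [fderiv_apply_mul_apply]
    exact ((hasFDerivAt_apply a x).mul_const (ej b)).add ((hasFDerivAt_apply b x).mul_const (ej a))
  rw [pd2, hgrad.fderiv]
  simp only [add_apply, smul_apply, ContinuousLinearMap.proj_apply, smul_eq_mul]
  ring

theorem integral_wrightFisher_const (F : Measure ℝ) [IsProbabilityMeasure F] (c : ℝ) :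
    ∫ _y, (∫ u in Ioo (0:ℝ) 1, (∫ _v in Ioo (0:ℝ) 1, c) * (2 * u)) ∂F = c := by
  have hdensity : ∫ u in Ioo (0:ℝ) 1, 2 * u = 1 := by
    rw [← integral_Ioc_eq_integral_Ioo, ← intervalIntegral.integral_of_le zero_le_one,
      intervalIntegral.integral_const_mul, integral_id]
    norm_num
  simp [integral_const_mul, hdensity]

theorem LopD_eq_of_pd2_eq (F : Measure ℝ) [IsProbabilityMeasure F] (θ : Fin d → ℝ)
    (g : (Fin d → ℝ) → ℝ) (H : Fin d → Fin d → ℝ) (hH : ∀ i j y, pd2 g i j y = H i j)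
    (x : Fin d → ℝ) :
    LopD F θ g x = (1/2) * ∑ i, ∑ j, x i * ((if i = j then 1 else 0) - x j) * H i j
      + (1/2) * ∑ i, (θ i - (∑ t, θ t) * x i) * fderiv ℝ g x (Pi.single i 1) := by
  simp only [LopD, hH, integral_wrightFisher_const]

theorem LopD_apply (F : Measure ℝ) [IsProbabilityMeasure F] (θ : Fin d → ℝ) (a : Fin d)
    (x : Fin d → ℝ) :
    LopD F θ (fun z => z a) x = (θ a - (∑ t, θ t) * x a) / 2 := by
  rw [LopD_eq_of_pd2_eq F θ _ (fun _ _ => 0) (fun i j y => pd2_apply_eq_zero a i j y)]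
  have hgrad : ∀ i, fderiv ℝ (fun z : Fin d → ℝ => z a) x (Pi.single i 1)
      = (Pi.single i 1 : Fin d → ℝ) a := fun i => by
    rw [(hasFDerivAt_apply a x).fderiv]; rfl
  simp only [one_div, mul_zero, Finset.sum_const_zero, hgrad, Pi.single_apply, mul_ite, mul_one,
    Finset.sum_ite_eq, Finset.mem_univ, ↓reduceIte, zero_add]
  ring

theorem LopD_apply_mul_apply (F : Measure ℝ) [IsProbabilityMeasure F] (θ : Fin d → ℝ)
    (a b : Fin d) (x : Fin d → ℝ) :
    LopD F θ (fun z => z a * z b) x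
      = ((if a = b then 1 else 0) * (x a + x b) + θ a * x b + θ b * x a) / 2
        - (1 + ∑ t, θ t) * (x a * x b) := by
  rw [LopD_eq_of_pd2_eq F θ _ _ (fun i j y => pd2_apply_mul_apply a b i j y)]
  simp only [one_div, Pi.single_apply, mul_ite, mul_one, mul_zero, mul_add, Finset.sum_add_distrib,
    Finset.sum_ite_eq, Finset.mem_univ, ↓reduceIte, fderiv_apply_mul_apply, ite_mul, one_mul, zero_mul]
  rcases eq_or_ne a b with rfl | hab
  · simp only [if_true]; ring
  · simp only [hab, hab.symm, if_false]; ring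

end Generator

section Moments

variable {d : ℕ} {μ : Measure (Fin d → ℝ)}

theorem integrable_apply_of_ae_abs_le_one [IsFiniteMeasure μ] (hμ : ∀ᵐ x ∂μ, ∀ i, |x i| ≤ 1)
    (a : Fin d) : Integrable (fun x => x a) μ :=
  Integrable.of_bound (measurable_pi_apply a).aestronglyMeasurable 1
    (hμ.mono fun _ hx => hx a)

theorem integrable_apply_mul_apply_of_ae_abs_le_one [IsFiniteMeasure μ]
    (hμ : ∀ᵐ x ∂μ, ∀ i, |x i| ≤ 1) (a b : Fin d) : Integrable (fun x => x a * x b) μ :=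
  Integrable.of_bound ((measurable_pi_apply a).mul (measurable_pi_apply b)).aestronglyMeasurable 1
    (hμ.mono fun _ hx => by
      rw [Real.norm_eq_abs, abs_mul]
      exact mul_le_one₀ (hx a) (abs_nonneg _) (hx b))

theorem integral_LopD_apply [IsProbabilityMeasure μ] (F : Measure ℝ) [IsProbabilityMeasure F]
    (θ : Fin d → ℝ) (a : Fin d) (ha : Integrable (fun x => x a) μ) :
    ∫ x, LopD F θ (fun z => z a) x ∂μ = (θ a - (∑ t, θ t) * ∫ x, x a ∂μ) / 2 := by
  simp only [LopD_apply]
  rw [integral_div, integral_sub (integrable_const _) (ha.const_mul _), integral_const_mul]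
  simp

theorem integral_LopD_apply_mul_apply (F : Measure ℝ) [IsProbabilityMeasure F] (θ : Fin d → ℝ)
    (a b : Fin d) (ha : Integrable (fun x => x a) μ) (hb : Integrable (fun x => x b) μ)
    (hab : Integrable (fun x => x a * x b) μ) :
    ∫ x, LopD F θ (fun z => z a * z b) x ∂μ
      = ((if a = b then 1 else 0) * (∫ x, x a ∂μ + ∫ x, x b ∂μ) + θ a * ∫ x, x b ∂μ
          + θ b * ∫ x, x a ∂μ) / 2 - (1 + ∑ t, θ t) * ∫ x, x a * x b ∂μ := by
  have hδ := (ha.fun_add hb).const_mul (if a = b then (1:ℝ) else 0)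
  have hδb := hδ.fun_add (hb.const_mul (θ a))
  simp only [LopD_apply_mul_apply]
  rw [integral_sub ((hδb.fun_add (ha.const_mul (θ b))).div_const 2) (hab.const_mul _), integral_div,
    integral_add hδb (ha.const_mul _), integral_add hδ (hb.const_mul _), integral_const_mul,
    integral_add ha hb, integral_const_mul, integral_const_mul, integral_const_mul]

end Moments

theorem stmt11_general {d : ℕ} (F : Measure ℝ) [IsProbabilityMeasure F]
    (θ : Fin d → ℝ) (hθ : ∀ i, 0 < θ i)
    (μ : Measure (Fin d → ℝ)) [IsProbabilityMeasure μ]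
    (hμ : μ {x | (∀ i, 0 ≤ x i ∧ x i ≤ 1) ∧ ∑ i, x i ≤ 1}ᶜ = 0)
    (h1 : ∀ i, ∫ x, LopD F θ (fun z => z i) x ∂μ = 0)
    (h2 : ∀ i j, ∫ x, LopD F θ (fun z => z i * z j) x ∂μ = 0) :
    (∀ i, ∫ x, x i ∂μ = θ i / (∑ t, θ t)) ∧
    (∀ i j, ∫ x, x i * x j ∂μ
        = θ i * (θ j + if i = j then 1 else 0) / ((∑ t, θ t) * ((∑ t, θ t) + 1))) := by
  have hbound : ∀ᵐ x ∂μ, ∀ i, |x i| ≤ 1 := by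
    filter_upwards [ae_iff.2 hμ] with x hx i
    exact abs_le.2 ⟨by linarith [(hx.1 i).1], (hx.1 i).2⟩
  have hint1 := integrable_apply_of_ae_abs_le_one hbound
  have hθsum (i : Fin d) : 0 < ∑ t, θ t := Finset.sum_pos (fun t _ => hθ t) ⟨i, Finset.mem_univ i⟩
  have hmean (i : Fin d) : ∫ x, x i ∂μ = θ i / ∑ t, θ t := by
    have h := h1 i
    rw [integral_LopD_apply F θ i (hint1 i)] at h
    field_simp [(hθsum i).ne']
    linarith
  refine ⟨hmean, fun i j => ?_⟩
  have h := h2 i j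
  rw [integral_LopD_apply_mul_apply F θ i j (hint1 i) (hint1 j)
    (integrable_apply_mul_apply_of_ae_abs_le_one hbound i j), hmean i, hmean j] at h
  have hpos := hθsum i
  rcases eq_or_ne i j with rfl | hij
  · simp only [if_true] at h ⊢
    field_simp at h ⊢
    linarith
  · simp only [hij, if_false] at h ⊢
    field_simp at h ⊢
    linarith

/-- the first and second moments of any stationary distribution of the
Λ-Fleming-Viot process with parent-independent mutation coincide with the Dirichlet
moments, regardless of `F`. -/
theorem stmt11 {d : ℕ} (F : Measure ℝ) [IsProbabilityMeasure F]
    (hF : F (Set.Icc (0:ℝ) 1)ᶜ = 0)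
    (θ : Fin d → ℝ) (hθ : ∀ i, 0 < θ i)
    (μ : Measure (Fin d → ℝ)) [IsProbabilityMeasure μ]
    (hμ : μ {x | (∀ i, 0 ≤ x i ∧ x i ≤ 1) ∧ ∑ i, x i ≤ 1}ᶜ = 0)
    (h1 : ∀ i, ∫ x, LopD F θ (fun z => z i) x ∂μ = 0)
    (h2 : ∀ i j, ∫ x, LopD F θ (fun z => z i * z j) x ∂μ = 0) :
    (∀ i, ∫ x, x i ∂μ = θ i / (∑ t, θ t)) ∧
    (∀ i j, ∫ x, x i * x j ∂μ
        = θ i * (θ j + if i = j then 1 else 0) / ((∑ t, θ t) * ((∑ t, θ t) + 1))) :=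
  stmt11_general F θ hθ μ hμ h1 h2
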